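/- Let Q be the one-vertex quiver with no arrows, m > 2, and R' = {0} the sequence consisting of a single zero relation. The Ginzburg dg-algebra Γ' = Γ(Q, R', m) is the dg path algebra on one vertex with loops ε (degree 2−m), ε* (degree −1), t (degree −m), differential d(ε) = d(ε*) = 0, d(t) = εε* − (−1)^m ε*ε. Then dim_K H^{−i}(Γ') = 1 for 0 ≤ i < m−2, dim_K H^{−(m−2)}(Γ') = 2, and dim_K H^{−(m−1)}(Γ') = 2 + δ_{3,m}. -/

import Mathlib

/-- Degrees of the generators ε, ε*, t of the dg-algebra Γ' = Γ(•, {0}, m). -/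
def deg17 (m : ℤ) : Fin 3 → ℤ := ![2 - m, -1, -m]

/-- The degree-d graded piece of the free graded algebra K⟨ε, ε*, t⟩. -/
def gpF (K : Type) [Field K] (m : ℤ) (d : ℤ) : Submodule K (FreeAlgebra K (Fin 3)) :=
  Submodule.span K
    {x | ∃ l : List (Fin 3), (l.map (deg17 m)).sum = d ∧ x = (l.map (FreeAlgebra.ι K)).prod}

/-- The cohomology H^{−i} of the dg-algebra (K⟨ε, ε*, t⟩, D). -/
abbrev Hneg (K : Type) [Field K] (m : ℤ)
    (D : FreeAlgebra K (Fin 3) →ₗ[K] FreeAlgebra K (Fin 3)) (i : ℤ) :=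
  ↥(gpF K m (-i) ⊓ LinearMap.ker D) ⧸
    Submodule.comap (gpF K m (-i) ⊓ LinearMap.ker D).subtype
      (Submodule.map D (gpF K m (-i - 1)))

/-!
Words in ε, ε*, t form a basis of the free algebra, and a word with a letters ε, b letters ε*
and c letters t has degree −(a(m−2) + b + cm). So in degrees above −m no word contains t, and
as D kills ε and ε*, all of D vanishes there: for i ≤ m − 1 every element of degree −i is a
cycle, and the only boundaries in that range are the multiples of D t = εε* − (−1)^m ε*ε, in
degree −(m−1). The cohomology dimensions are therefore word counts: the words of degree −i are
(ε*)^i, together with ε when i = m − 2, and εε*, ε*ε (and ε² if m = 3) when i = m − 1.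
-/

open Submodule Module

namespace Ginzburg

def wordsOfDeg (m d : ℤ) : Set (List (Fin 3)) := {l | (l.map (deg17 m)).sum = d}

theorem length_eq_count_add (l : List (Fin 3)) :
    l.length = l.count 0 + l.count 1 + l.count 2 := by
  induction l with
  | nil => simp
  | cons h t ih => fin_cases h <;> simp [ih] <;> omega

theorem sum_map_deg17 (m : ℤ) (l : List (Fin 3)) :
    (l.map (deg17 m)).sum = -((l.count 0 : ℤ) * (m - 2) + l.count 1 + (l.count 2 : ℤ) * m) := by
  induction l with
  | nil => simp
  | cons h t ih =>
    rw [List.map_cons, List.sum_cons, ih]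
    fin_cases h <;> simp [deg17] <;> ring

theorem sum_map_deg17_le_neg_length {m : ℤ} (hm : 2 < m) (l : List (Fin 3)) :
    (l.map (deg17 m)).sum ≤ -l.length := by
  rw [sum_map_deg17, length_eq_count_add]
  push_cast
  nlinarith [(l.count 0).cast_nonneg (α := ℤ), (l.count 2).cast_nonneg (α := ℤ)]

theorem wordsOfDeg_finite {m : ℤ} (hm : 2 < m) (d : ℤ) : (wordsOfDeg m d).Finite :=
  (List.finite_length_le (Fin 3) d.natAbs).subset fun l (hl : _ = d) => by
    have := sum_map_deg17_le_neg_length hm l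
    simp only [Set.mem_ofPred_eq]
    omega

theorem two_notMem_of_mem_wordsOfDeg {m d : ℤ} (hm : 2 < m) (hd : -m < d) {l : List (Fin 3)}
    (hl : l ∈ wordsOfDeg m d) : 2 ∉ l := by
  intro h2
  have hc : (1 : ℤ) ≤ l.count 2 := by exact_mod_cast List.count_pos_iff.mpr h2
  have := sum_map_deg17 m l
  rw [hl] at this
  nlinarith [(l.count 0).cast_nonneg (α := ℤ), (l.count 1).cast_nonneg (α := ℤ)]

theorem mem_wordsOfDeg_neg_iff {m i : ℤ} (hm : 2 < m) (hi : 0 ≤ i) (hi' : i ≤ m - 1)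
    (l : List (Fin 3)) :
    l ∈ wordsOfDeg m (-i) ↔ l = List.replicate i.toNat 1 ∨ (i = m - 2 ∧ l = [0]) ∨
      (i = m - 1 ∧ (l = [0, 1] ∨ l = [1, 0])) ∨ (m = 3 ∧ i = 2 ∧ l = [0, 0]) := by
  constructor
  · intro hl
    have hdeg := sum_map_deg17 m l
    rw [hl] at hdeg
    have h2 : l.count 2 = 0 := List.count_eq_zero.mpr
      (two_notMem_of_mem_wordsOfDeg hm (by omega) hl)
    have hlen := length_eq_count_add l
    rw [h2] at hdeg hlen
    by_cases h0 : l.count 0 = 0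
    · left
      rw [List.eq_replicate_iff]
      refine ⟨by push_cast at hdeg; rw [h0] at hdeg hlen; omega, fun x hx => ?_⟩
      fin_cases x
      · exact absurd hx (List.count_eq_zero.mp h0)
      · rfl
      · exact absurd hx (List.count_eq_zero.mp h2)
    · right
      have ha : (1 : ℤ) ≤ l.count 0 := by exact_mod_cast Nat.one_le_iff_ne_zero.mpr h0
      -- an ε uses up m − 2 of the budget i ≤ m − 1,
      -- leaving room for one ε* (or one more ε if m = 3)
      have hlen2 : l.length ≤ 2 := by
        zify at hlen ⊢
        nlinarith [mul_nonneg (sub_nonneg.mpr ha) (show (0 : ℤ) ≤ m - 3 by omega)]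
      rcases l with _ | ⟨x, _ | ⟨y, _ | ⟨z, l⟩⟩⟩
      · simp at h0
      · fin_cases x <;> simp_all
        omega
      · fin_cases x <;> fin_cases y <;> simp_all <;> omega
      · simp at hlen2
  · rintro (rfl | ⟨rfl, rfl⟩ | ⟨rfl, rfl | rfl⟩ | ⟨rfl, rfl, rfl⟩) <;>
      simp [wordsOfDeg, deg17, List.sum_replicate] <;> omega

theorem replicate_one_ne_of_zero_mem {n : ℕ} {l : List (Fin 3)} (h : 0 ∈ l) :
    List.replicate n 1 ≠ l := by
  rintro rfl
  simp at h

theorem ncard_wordsOfDeg_neg_of_lt {m i : ℤ} (hm : 2 < m) (hi : 0 ≤ i) (hi' : i < m - 2) :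
    (wordsOfDeg m (-i)).ncard = 1 := by
  rw [Set.ncard_eq_one]
  refine ⟨List.replicate i.toNat 1, Set.ext fun l => ?_⟩
  rw [mem_wordsOfDeg_neg_iff hm hi (by omega)]
  constructor
  · rintro (h | ⟨h, -⟩ | ⟨h, -⟩ | ⟨rfl, rfl, -⟩) <;> first | exact h | omega
  · exact Or.inl

theorem ncard_wordsOfDeg_neg_sub_two {m : ℤ} (hm : 2 < m) :
    (wordsOfDeg m (-(m - 2))).ncard = 2 := by
  have : wordsOfDeg m (-(m - 2)) = {List.replicate (m - 2).toNat 1, [0]} := by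
    ext l
    rw [mem_wordsOfDeg_neg_iff hm (by omega) (by omega)]
    simp only [Set.mem_insert_iff, Set.mem_singleton_iff]
    constructor
    · rintro (h | ⟨-, h⟩ | ⟨h, -⟩ | ⟨rfl, h, -⟩) <;> first | omega | simp [h]
    · rintro (h | h) <;> simp [h]
  rw [this, Set.ncard_pair (replicate_one_ne_of_zero_mem (by simp))]

theorem ncard_wordsOfDeg_neg_sub_one {m : ℤ} (hm : 2 < m) :
    (wordsOfDeg m (-(m - 1))).ncard = 3 + if m = 3 then 1 else 0 := by
  split_ifs with hm3
  · subst hm3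
    have : wordsOfDeg 3 (-(3 - 1)) =
        ↑({[1, 1], [0, 1], [1, 0], [0, 0]} : Finset (List (Fin 3))) := by
      ext l
      rw [mem_wordsOfDeg_neg_iff hm (by omega) le_rfl]
      simp only [Finset.coe_insert, Finset.coe_singleton, Set.mem_insert_iff,
        Set.mem_singleton_iff]
      norm_num
      tauto
    rw [this, Set.ncard_coe_finset]
    rfl
  · rw [Set.ncard_eq_three]
    refine ⟨List.replicate (m - 1).toNat 1, [0, 1], [1, 0],
      replicate_one_ne_of_zero_mem (by simp), replicate_one_ne_of_zero_mem (by simp), by simp,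
      Set.ext fun l => ?_⟩
    rw [mem_wordsOfDeg_neg_iff hm (by omega) le_rfl]
    simp only [Set.mem_insert_iff, Set.mem_singleton_iff]
    constructor
    · rintro (h | ⟨h, -⟩ | ⟨-, h⟩ | ⟨h, -⟩) <;> first | omega | tauto
    · rintro (h | h | h) <;> simp [h]

theorem eq_singleton_two_of_mem_wordsOfDeg {m : ℤ} (hm : 2 < m) {l : List (Fin 3)}
    (hl : l ∈ wordsOfDeg m (-m)) (h2 : 2 ∈ l) : l = [2] := by
  have hc : (1 : ℤ) ≤ l.count 2 := by exact_mod_cast List.count_pos_iff.mpr h2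
  have hdeg := sum_map_deg17 m l
  rw [hl] at hdeg
  have hlen := length_eq_count_add l
  zify at hlen
  have : l.length = 1 := by
    nlinarith [(l.count 0).cast_nonneg (α := ℤ), (l.count 1).cast_nonneg (α := ℤ)]
  obtain ⟨x, rfl⟩ := List.length_eq_one_iff.mp this
  simpa [eq_comm] using h2

section FreeAlgebra

variable (K : Type) [Field K] {X : Type*}

noncomputable def word (l : List X) : FreeAlgebra K X := (l.map (FreeAlgebra.ι K)).prod

theorem basisFreeMonoid_ofList (l : List X) :
    FreeAlgebra.basisFreeMonoid K X (FreeMonoid.ofList l) = word K l := by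
  simp [FreeAlgebra.basisFreeMonoid, FreeAlgebra.equivMonoidAlgebraFreeMonoid,
    MonoidAlgebra.lift_apply, FreeMonoid.lift_apply, word]

theorem linearIndependent_word : LinearIndependent K (word K : List X → FreeAlgebra K X) := by
  have h := (FreeAlgebra.basisFreeMonoid K X).linearIndependent.comp _
    FreeMonoid.ofList.injective
  simpa [Function.comp_def, basisFreeMonoid_ofList] using h

theorem finrank_span_image_word {s : Set (List X)} (hs : s.Finite) :
    finrank K (span K (word K '' s)) = s.ncard := by
  have := hs.fintype
  rw [Set.image_eq_range, Set.ncard_eq_toFinset_card' s, Set.toFinset_card]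
  exact finrank_span_eq_card ((linearIndependent_word K).comp _ Subtype.val_injective)

end FreeAlgebra

theorem gpF_eq_span_word (K : Type) [Field K] (m d : ℤ) :
    gpF K m d = span K (word K '' wordsOfDeg m d) := by
  rw [gpF]
  congr 1
  ext x
  simp [wordsOfDeg, word, eq_comm]

theorem finrank_gpF (K : Type) [Field K] {m : ℤ} (hm : 2 < m) (d : ℤ) :
    finrank K (gpF K m d) = (wordsOfDeg m d).ncard := by
  rw [gpF_eq_span_word, finrank_span_image_word K (wordsOfDeg_finite hm d)]

theorem finiteDimensional_gpF (K : Type) [Field K] {m : ℤ} (hm : 2 < m) (d : ℤ) :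
    FiniteDimensional K (gpF K m d) := by
  rw [gpF_eq_span_word]
  exact FiniteDimensional.span_of_finite K ((wordsOfDeg_finite hm d).image _)

section Differential

variable {K : Type} [Field K] {m : ℤ} {D : FreeAlgebra K (Fin 3) →ₗ[K] FreeAlgebra K (Fin 3)}

def IsGradedLeibniz (K : Type) [Field K] (m : ℤ)
    (D : FreeAlgebra K (Fin 3) →ₗ[K] FreeAlgebra K (Fin 3)) : Prop :=
  ∀ (d : ℤ) (x y : FreeAlgebra K (Fin 3)), x ∈ gpF K m d →
    D (x * y) = D x * y + ((-1 : K) ^ d) • (x * D y)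

theorem IsGradedLeibniz.map_one (hD : IsGradedLeibniz K m D) : D 1 = 0 := by
  have h := hD 0 1 1 (subset_span ⟨[], by simp, by simp⟩)
  simpa using h

theorem IsGradedLeibniz.map_word (hD : IsGradedLeibniz K m D)
    (h0 : D (FreeAlgebra.ι K 0) = 0) (h1 : D (FreeAlgebra.ι K 1) = 0)
    {l : List (Fin 3)} (h2 : 2 ∉ l) : D (word K l) = 0 := by
  induction l with
  | nil => exact hD.map_one
  | cons j l ih =>
    have hj : D (FreeAlgebra.ι K j) = 0 := by
      fin_cases j
      · exact h0
      · exact h1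
      · exact absurd List.mem_cons_self h2
    rw [word, List.map_cons, List.prod_cons,
      hD (deg17 m j) _ _ (subset_span ⟨[j], by simp, by simp⟩), hj, ← word,
      ih (fun h => h2 (List.mem_cons_of_mem _ h))]
    simp

theorem IsGradedLeibniz.gpF_le_ker (hD : IsGradedLeibniz K m D) (hm : 2 < m)
    (h0 : D (FreeAlgebra.ι K 0) = 0) (h1 : D (FreeAlgebra.ι K 1) = 0)
    {d : ℤ} (hd : -m < d) : gpF K m d ≤ LinearMap.ker D := by
  rw [gpF_eq_span_word, span_le]
  rintro _ ⟨l, hl, rfl⟩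
  exact hD.map_word h0 h1 (two_notMem_of_mem_wordsOfDeg hm hd hl)

theorem IsGradedLeibniz.map_gpF_neg (hD : IsGradedLeibniz K m D) (hm : 2 < m)
    (h0 : D (FreeAlgebra.ι K 0) = 0) (h1 : D (FreeAlgebra.ι K 1) = 0) :
    map D (gpF K m (-m)) = span K {D (FreeAlgebra.ι K 2)} := by
  have ht : word K [(2 : Fin 3)] = FreeAlgebra.ι K 2 := by simp [word]
  rw [gpF_eq_span_word]
  apply le_antisymm
  · rw [map_span_le]
    rintro _ ⟨l, hl, rfl⟩
    by_cases h2 : 2 ∈ l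
    · rw [eq_singleton_two_of_mem_wordsOfDeg hm hl h2, ht]
      exact mem_span_singleton_self _
    · rw [hD.map_word h0 h1 h2]
      exact zero_mem _
  · rw [span_le, Set.singleton_subset_iff, ← ht]
    exact mem_map_of_mem (subset_span ⟨[2], by simp [wordsOfDeg, deg17], rfl⟩)

end Differential

theorem ι_mul_ι_sub_smul_ι_mul_ι_ne_zero (K : Type) [Field K] (c : K) :
    FreeAlgebra.ι K (0 : Fin 3) * FreeAlgebra.ι K 1 -
      c • (FreeAlgebra.ι K 1 * FreeAlgebra.ι K 0) ≠ 0 := by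
  intro h
  have := (LinearIndepOn.pair_iff (word K) (show ([0, 1] : List (Fin 3)) ≠ [1, 0] by decide)).mp
    ((linearIndependent_word K).linearIndepOn _) 1 (-c)
    (by simpa [word, sub_eq_add_neg] using h)
  exact one_ne_zero this.1

theorem finrank_quotient_comap_subtype_add_finrank {K V : Type*} [DivisionRing K]
    [AddCommGroup V] [Module K V] {B Z : Submodule K V} (hBZ : B ≤ Z) [FiniteDimensional K Z] :
    finrank K (Z ⧸ B.comap Z.subtype) + finrank K B = finrank K Z := by
  rw [← (comapSubtypeEquivOfLe hBZ).finrank_eq]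
  exact Submodule.finrank_quotient_add_finrank _

theorem finrank_Hneg_add_finrank_map {K : Type} [Field K] {m : ℤ}
    {D : FreeAlgebra K (Fin 3) →ₗ[K] FreeAlgebra K (Fin 3)}
    (hshift : ∀ d : ℤ, map D (gpF K m d) ≤ gpF K m (d + 1)) (hDD : ∀ x, D (D x) = 0)
    (i : ℤ)
    [FiniteDimensional K ↥(gpF K m (-i) ⊓ LinearMap.ker D)] :
    finrank K (Hneg K m D i) + finrank K (map D (gpF K m (-i - 1))) =
      finrank K ↥(gpF K m (-i) ⊓ LinearMap.ker D) := by
  refine finrank_quotient_comap_subtype_add_finrank (le_inf ?_ ?_)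
  · simpa using hshift (-i - 1)
  · rintro _ ⟨x, -, rfl⟩
    exact hDD x

end Ginzburg

open Ginzburg in
/-- for m > 2, the dg-algebra Γ' = K⟨ε, ε*, t⟩ with |ε| = 2−m, |ε*| = −1,
|t| = −m, d(ε) = d(ε*) = 0 and d(t) = εε* − (−1)^m ε*ε, has
dim H^{−i} = 1 for 0 ≤ i < m−2, dim H^{−(m−2)} = 2, and dim H^{−(m−1)} = 2 + δ_{3,m}. -/
theorem stmt_17 (K : Type) [Field K] (m : ℤ) (hm : 2 < m)
    (D : FreeAlgebra K (Fin 3) →ₗ[K] FreeAlgebra K (Fin 3))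
    (hDeps : D (FreeAlgebra.ι K 0) = 0)
    (hDepsStar : D (FreeAlgebra.ι K 1) = 0)
    (hDt : D (FreeAlgebra.ι K 2) =
      FreeAlgebra.ι K 0 * FreeAlgebra.ι K 1 -
        ((-1 : K) ^ m) • (FreeAlgebra.ι K 1 * FreeAlgebra.ι K 0))
    (hLeib : ∀ (d : ℤ) (x y : FreeAlgebra K (Fin 3)), x ∈ gpF K m d →
      D (x * y) = D x * y + ((-1 : K) ^ d) • (x * D y))
    (hshift : ∀ d : ℤ, Submodule.map D (gpF K m d) ≤ gpF K m (d + 1))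
    (hDD : ∀ x, D (D x) = 0) :
    (∀ i : ℤ, 0 ≤ i → i < m - 2 → Module.finrank K (Hneg K m D i) = 1) ∧
      Module.finrank K (Hneg K m D (m - 2)) = 2 ∧
      Module.finrank K (Hneg K m D (m - 1)) = 2 + (if m = 3 then 1 else 0) := by
  have hD : IsGradedLeibniz K m D := hLeib
  have hH : ∀ i, i ≤ m - 1 → finrank K (Hneg K m D i) +
      finrank K (map D (gpF K m (-i - 1))) = (wordsOfDeg m (-i)).ncard := by
    intro i hi
    have := finiteDimensional_gpF K hm (-i)
    have hZ : finrank K ↥(gpF K m (-i) ⊓ LinearMap.ker D) = (wordsOfDeg m (-i)).ncard := by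
      rw [inf_eq_left.mpr (hD.gpF_le_ker hm hDeps hDepsStar (by omega)), finrank_gpF K hm]
    exact (finrank_Hneg_add_finrank_map hshift hDD i).trans hZ
  have hB : ∀ i, i < m - 1 → finrank K (map D (gpF K m (-i - 1))) = 0 := fun i hi => by
    rw [LinearMap.le_ker_iff_map.mp (hD.gpF_le_ker hm hDeps hDepsStar (by omega)), finrank_bot]
  have hBtop : finrank K (map D (gpF K m (-(m - 1) - 1))) = 1 := by
    rw [show -(m - 1) - 1 = -m by ring, hD.map_gpF_neg hm hDeps hDepsStar,
      finrank_span_singleton (hDt ▸ ι_mul_ι_sub_smul_ι_mul_ι_ne_zero K _)]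
  refine ⟨fun i hi0 hi => ?_, ?_, ?_⟩
  · have := hH i (by omega)
    have := hB i (by omega)
    have := ncard_wordsOfDeg_neg_of_lt hm hi0 hi
    omega
  · have := hH (m - 2) (by omega)
    have := hB (m - 2) (by omega)
    have := ncard_wordsOfDeg_neg_sub_two hm
    omega
  · have := hH (m - 1) le_rfl
    have := ncard_wordsOfDeg_neg_sub_one hm
    omega
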